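/- arXiv:2509.24720 — 5 statements merged into one kernel-verified Lean document; each statement's English description precedes it below -/
import Mathlib

section
/- Let ĉ(λ, β, T) be the unique solution of ĉ = 1 - (1/(λT)) ln(1 + λT(ĉ + βT/2)). If 0 < ĉ < 1, then ∂ĉ/∂β < 0, i.e., the implicitly defined root is strictly decreasing in the time-sensitivity parameter β. -/
/-!
Differentiating the defining identity at β₀ gives `d = -(d + T/2) / u` with
`u = 1 + λT(ĉ + β₀T/2)`, i.e. `d = -T / (2(u + 1))`; and `u > 1` because `ĉ > 0`.
-/

open Real Filter Topology

lemma hasDerivAt_one_sub_log_affine {a T d β₀ : ℝ} {c : ℝ → ℝ} (ha : a ≠ 0)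
    (hu : 1 + a * (c β₀ + β₀ * T / 2) ≠ 0) (hd : HasDerivAt c d β₀) :
    HasDerivAt (fun β => 1 - 1 / a * log (1 + a * (c β + β * T / 2)))
      (-(d + T / 2) / (1 + a * (c β₀ + β₀ * T / 2))) β₀ := by
  have hinner : HasDerivAt (fun β => 1 + a * (c β + β * T / 2)) (a * (d + T / 2)) β₀ := by
    have hlin : HasDerivAt (fun β : ℝ => β * T / 2) (T / 2) β₀ := by
      simpa using ((hasDerivAt_id' β₀).mul_const T).div_const 2
    exact ((hd.add hlin).const_mul a).const_add 1
  refine (((hinner.log hu).const_mul (1 / a)).const_sub 1).congr_deriv ?_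
  field_simp

theorem eq_neg_div_of_hasDerivAt_log_root {a T d β₀ : ℝ} {c : ℝ → ℝ} (ha : a ≠ 0)
    (hroot : ∀ᶠ β in 𝓝 β₀, c β = 1 - 1 / a * log (1 + a * (c β + β * T / 2)))
    (hu : 0 < 1 + a * (c β₀ + β₀ * T / 2)) (hd : HasDerivAt c d β₀) :
    d = -T / (2 * (2 + a * (c β₀ + β₀ * T / 2))) := by
  have hd' : d = -(d + T / 2) / (1 + a * (c β₀ + β₀ * T / 2)) :=
    hd.unique ((hasDerivAt_one_sub_log_affine ha hu.ne' hd).congr_of_eventuallyEq hroot)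
  rw [eq_div_iff hu.ne'] at hd'
  rw [eq_div_iff (by linarith)]
  linear_combination 2 * hd'

theorem stmt_1_general (lam T : ℝ) (hlam : 0 < lam) (hT : 0 < T)
    (c : ℝ → ℝ) (β₀ d : ℝ) (hβ₀ : 0 < β₀)
    (hroot : ∀ β > (0:ℝ),
      c β = 1 - (1 / (lam * T)) * Real.log (1 + lam * T * (c β + β * T / 2)))
    (hc0 : 0 < c β₀)
    (hd : HasDerivAt c d β₀) : d < 0 := by
  have hshift : 0 < lam * T * (c β₀ + β₀ * T / 2) := by positivity
  rw [eq_neg_div_of_hasDerivAt_log_root (mul_pos hlam hT).ne'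
    ((eventually_gt_nhds hβ₀).mono hroot) (by linarith) hd]
  exact div_neg_of_neg_of_pos (by linarith) (by linarith)

/-- the implicit root ĉ(β) of ĉ = 1 - (1/(λT))ln(1 + λT(ĉ + βT/2)) is
strictly decreasing in β: if 0 < ĉ(β₀) < 1 then its derivative at β₀ is negative. -/
theorem stmt_1 (lam T : ℝ) (hlam : 0 < lam) (hT : 0 < T)
    (c : ℝ → ℝ) (β₀ d : ℝ) (hβ₀ : 0 < β₀)
    (hroot : ∀ β > (0:ℝ),
      c β = 1 - (1 / (lam * T)) * Real.log (1 + lam * T * (c β + β * T / 2)))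
    (hc0 : 0 < c β₀) (hc1 : c β₀ < 1)
    (hd : HasDerivAt c d β₀) : d < 0 :=
  stmt_1_general lam T hlam hT c β₀ d hβ₀ hroot hc0 hd
end

section
/- Let ĉ(λ, β, T) be the unique solution of ĉ = 1 - (1/(λT)) ln(1 + λT(ĉ + βT/2)). If 0 < ĉ < 1, then ĉ is strictly increasing in λ, i.e., ∂ĉ/∂λ > 0. -/
/-!
Write `u = 1 + λT(ĉ + βT/2) > 1`, so that the root satisfies `log u = λT(1 - ĉ)`. Differentiating
this identity in `λ` and eliminating `1 - ĉ` gives `λ²T(1 + u) ĉ' = u log u - (u - 1)`, which is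
positive because `u - 1 < u log u` for every positive `u ≠ 1`.
-/

open Real Filter

lemma log_eq_mul_one_sub_of_eq_one_sub {x y c : ℝ} (hx : x ≠ 0) (h : c = 1 - 1 / x * log y) :
    log y = x * (1 - c) := by
  rw [h, sub_sub_cancel, ← mul_assoc, mul_one_div_cancel hx, one_mul]

lemma hasDerivAt_log_one_add_sub_mul (T k : ℝ) {c : ℝ → ℝ} {d lam₀ : ℝ} (hd : HasDerivAt c d lam₀)
    (hu : 1 + lam₀ * T * (c lam₀ + k) ≠ 0) :
    HasDerivAt (fun lam => log (1 + lam * T * (c lam + k)) - lam * T * (1 - c lam))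
      ((T * (c lam₀ + k) + lam₀ * T * d) / (1 + lam₀ * T * (c lam₀ + k))
        - (T * (1 - c lam₀) - lam₀ * T * d)) lam₀ := by
  have hlamT : HasDerivAt (fun lam : ℝ => lam * T) T lam₀ := by
    simpa using (hasDerivAt_id lam₀).mul_const T
  have hinner := ((hlamT.fun_mul (hd.add_const k)).const_add 1).log hu
  have hlin := hlamT.fun_mul (hd.const_sub 1)
  exact (hinner.sub hlin).congr_deriv (by ring)

theorem stmt_2_general (β T : ℝ) (hβ : 0 ≤ β) (hT : 0 < T)
    (c : ℝ → ℝ) (lam₀ d : ℝ) (hlam₀ : 0 < lam₀)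
    (hroot : ∀ lam > (0:ℝ),
      c lam = 1 - (1 / (lam * T)) * Real.log (1 + lam * T * (c lam + β * T / 2)))
    (hc0 : 0 < c lam₀)
    (hd : HasDerivAt c d lam₀) : 0 < d := by
  have hroot_log : ∀ lam > (0:ℝ),
      log (1 + lam * T * (c lam + β * T / 2)) = lam * T * (1 - c lam) := fun lam hlam =>
    log_eq_mul_one_sub_of_eq_one_sub (mul_pos hlam hT).ne' (hroot lam hlam)
  set u := 1 + lam₀ * T * (c lam₀ + β * T / 2) with hu
  have hu1 : 1 < u := by
    have : 0 < lam₀ * T * (c lam₀ + β * T / 2) := by positivity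
    linarith
  have hderiv_zero := (hasDerivAt_log_one_add_sub_mul T (β * T / 2) hd (by positivity)).unique
    ((hasDerivAt_const lam₀ (0:ℝ)).congr_of_eventuallyEq <| by
      filter_upwards [eventually_gt_nhds hlam₀] with lam hlam
      simp [hroot_log lam hlam])
  have key : lam₀ ^ 2 * T * (1 + u) * d = u * log u - (u - 1) := by
    rw [← hu] at hderiv_zero
    rw [hroot_log lam₀ hlam₀]
    field_simp at hderiv_zero
    linear_combination (lam₀ / 2) * hderiv_zero + hu
  have hpos : 0 < lam₀ ^ 2 * T * (1 + u) * d := by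
    rw [key, sub_pos]
    exact self_sub_one_lt_mul_log (by positivity) hu1.ne'
  exact pos_of_mul_pos_right hpos (by positivity)

/-- the implicit root ĉ(λ) of ĉ = 1 - (1/(λT))ln(1 + λT(ĉ + βT/2)) is
strictly increasing in λ: if 0 < ĉ(λ₀) < 1 then its derivative at λ₀ is positive. -/
theorem stmt_2 (β T : ℝ) (hβ : 0 ≤ β) (hT : 0 < T)
    (c : ℝ → ℝ) (lam₀ d : ℝ) (hlam₀ : 0 < lam₀)
    (hroot : ∀ lam > (0:ℝ),
      c lam = 1 - (1 / (lam * T)) * Real.log (1 + lam * T * (c lam + β * T / 2)))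
    (hc0 : 0 < c lam₀) (hc1 : c lam₀ < 1)
    (hd : HasDerivAt c d lam₀) : 0 < d :=
  stmt_2_general β T hβ hT c lam₀ d hlam₀ hroot hc0 hd
end

section
/- Let p : [0,T] → ℝ be differentiable and non-increasing, λ > 0, β ≥ 0. If p satisfies the Euler–Lagrange equation for the Lagrangian L(t, p, p') = (p' - β) e^{-λt(1-p)}, namely ∂L/∂p - d/dt(∂L/∂p') = 0 on (0,T), then p(t) = 1 - βt on (0,T). -/
/-! By the chain rule, `D t = e^{-λt(1-p)} · λ(t p' - (1 - p))`, so the `t p'` terms cancel and the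
Euler–Lagrange expression equals `λ e^{-λt(1-p)} (1 - p - βt)`; the first two factors never vanish. -/

open Real

theorem hasDerivAt_exp_neg_mul_one_sub {lam t q : ℝ} {p : ℝ → ℝ} (hp : HasDerivAt p q t) :
    HasDerivAt (fun s => exp (-(lam * s * (1 - p s))))
      (exp (-(lam * t * (1 - p t))) * (lam * (t * q - (1 - p t)))) t := by
  have hinner : HasDerivAt (fun s => -(lam * s * (1 - p s)))
      (-(lam * 1 * (1 - p t) + lam * t * -q)) t :=
    (((hasDerivAt_id' t).const_mul lam).mul (hp.const_sub 1)).neg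
  convert hinner.exp using 1
  ring

theorem euler_lagrange_expr_factor {lam β t x q : ℝ} :
    lam * t * (q - β) * exp (-(lam * t * (1 - x)))
        - exp (-(lam * t * (1 - x))) * (lam * (t * q - (1 - x)))
      = lam * exp (-(lam * t * (1 - x))) * (1 - x - β * t) := by
  ring

theorem stmt_6_general (lam β T : ℝ) (hlam : 0 < lam)
    (p p' D : ℝ → ℝ)
    (hderiv : ∀ t ∈ Set.Ioo (0:ℝ) T, HasDerivAt p (p' t) t)
    (hD : ∀ t ∈ Set.Ioo (0:ℝ) T,
      HasDerivAt (fun s => Real.exp (-(lam * s * (1 - p s)))) (D t) t)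
    (hEL : ∀ t ∈ Set.Ioo (0:ℝ) T,
      lam * t * (p' t - β) * Real.exp (-(lam * t * (1 - p t))) - D t = 0) :
    ∀ t ∈ Set.Ioo (0:ℝ) T, p t = 1 - β * t := by
  intro t ht
  have hDt := (hD t ht).unique (hasDerivAt_exp_neg_mul_one_sub (hderiv t ht))
  have hfactor := hEL t ht
  rw [hDt, euler_lagrange_expr_factor] at hfactor
  have hne : lam * exp (-(lam * t * (1 - p t))) ≠ 0 := by positivity
  linarith [(mul_eq_zero.mp hfactor).resolve_left hne]

/-- if a differentiable non-increasing price schedule p satisfies the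
Euler–Lagrange equation ∂L/∂p - d/dt(∂L/∂p') = 0 for L = (p' - β)e^{-λt(1-p)},
where ∂L/∂p = λt(p'-β)e^{-λt(1-p)} and ∂L/∂p' = e^{-λt(1-p)}, then p(t) = 1 - βt
on (0,T). -/
theorem stmt_6 (lam β T : ℝ) (hlam : 0 < lam) (hβ : 0 ≤ β) (hT : 0 < T)
    (p p' D : ℝ → ℝ)
    (hderiv : ∀ t ∈ Set.Ioo (0:ℝ) T, HasDerivAt p (p' t) t)
    (hmono : AntitoneOn p (Set.Icc 0 T))
    (hD : ∀ t ∈ Set.Ioo (0:ℝ) T,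
      HasDerivAt (fun s => Real.exp (-(lam * s * (1 - p s)))) (D t) t)
    (hEL : ∀ t ∈ Set.Ioo (0:ℝ) T,
      lam * t * (p' t - β) * Real.exp (-(lam * t * (1 - p t))) - D t = 0) :
    ∀ t ∈ Set.Ioo (0:ℝ) T, p t = 1 - β * t :=
  stmt_6_general lam β T hlam p p' D hderiv hD hEL
end

section
/- Let λ > 0, T > 0, β ≥ 0, and let U(c) = c(1 - e^{-λT(1-c)}) - β[(T/2)(1 - e^{-λT(1-c)}) + T e^{-λT(1-c)}] for c ∈ [0,1]. Let ĉ be the unique real root of F(c) = c - 1 + (1/(λT)) ln(1 + λT(c + βT/2)). Then U'(c) > 0 for c < ĉ and U'(c) < 0 for c > ĉ (within [0,1]), so the maximizer of U over [0,1] is ĉ if ĉ ∈ [0,1], is 0 if ĉ < 0, and is 1 if ĉ > 1. -/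
/-!
With `a = λT` and `b = βT/2` the utility is `U c = c (1 - E c) - b (1 + E c)`, where
`E c = exp (-a (1 - c))`, and `U' c = 1 - (1 + a (c + b)) E c`. Since `E c > 0`,
`U' c > 0` iff `1 + a (c + b) < exp (a (1 - c))` iff `F c < 0`, and likewise `U' c < 0` iff
`F c > 0`. As `F` is strictly increasing with root `ĉ`, `U` increases on `[0, ĉ]` and
decreases on `[ĉ, ∞)`, so its maximum over `[0, 1]` sits at `ĉ` clamped to `[0, 1]`.
-/

open Real Set

theorem IsMaxOn.of_monotoneOn_antitoneOn {f : ℝ → ℝ} {a b p : ℝ}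
    (hmono : MonotoneOn f (Icc a p)) (hanti : AntitoneOn f (Icc p b)) (hp : p ∈ Icc a b) :
    IsMaxOn f (Icc a b) p := by
  intro x hx
  rcases le_total x p with hxp | hpx
  · exact hmono ⟨hx.1, hxp⟩ ⟨hp.1, le_rfl⟩ hxp
  · exact hanti ⟨le_rfl, hp.2⟩ ⟨hpx, hx.2⟩ hpx

theorem one_sub_mul_exp_neg_pos_iff {x y : ℝ} (hx : 0 < x) :
    0 < 1 - x * exp (-y) ↔ log x < y := by
  rw [sub_pos, ← lt_div_iff₀ (exp_pos _), exp_neg, div_inv_eq_mul, one_mul,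
    log_lt_iff_lt_exp hx]

theorem one_sub_mul_exp_neg_neg_iff {x y : ℝ} (hx : 0 < x) :
    1 - x * exp (-y) < 0 ↔ y < log x := by
  rw [sub_neg, ← div_lt_iff₀ (exp_pos _), exp_neg, div_inv_eq_mul, one_mul,
    lt_log_iff_exp_lt hx]

/-- The seller's utility under a constant price, with `a = λT` and `b = βT/2`. -/
noncomputable def sellerUtility (a b c : ℝ) : ℝ :=
  c * (1 - exp (-(a * (1 - c)))) - b * (1 + exp (-(a * (1 - c))))

/-- The function `F` whose root `ĉ` is the critical point of `sellerUtility a b`. -/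
noncomputable def sellerFoc (a b c : ℝ) : ℝ :=
  c - 1 + (1 / a) * log (1 + a * (c + b))

theorem hasDerivAt_sellerUtility (a b c : ℝ) :
    HasDerivAt (sellerUtility a b) (1 - (1 + a * (c + b)) * exp (-(a * (1 - c)))) c := by
  have hE : HasDerivAt (fun x => exp (-(a * (1 - x)))) (exp (-(a * (1 - c))) * a) c := by
    simpa using (((hasDerivAt_id c).const_sub 1).const_mul a).neg.exp
  refine (((hasDerivAt_id' c).mul (hE.const_sub 1)).sub
    ((hE.const_add 1).const_mul b)).congr_deriv ?_
  ring

theorem continuous_sellerUtility (a b : ℝ) : Continuous (sellerUtility a b) :=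
  continuous_iff_continuousAt.2 fun c => (hasDerivAt_sellerUtility a b c).continuousAt

section

variable {a b : ℝ}

theorem deriv_sellerUtility_pos_iff (ha : 0 < a) {c : ℝ} (hc : 0 < 1 + a * (c + b)) :
    0 < deriv (sellerUtility a b) c ↔ sellerFoc a b c < 0 := by
  rw [(hasDerivAt_sellerUtility a b c).deriv, one_sub_mul_exp_neg_pos_iff hc,
    sellerFoc, one_div_mul_eq_div, ← div_lt_iff₀' ha]
  constructor <;> intro h <;> linarith

theorem deriv_sellerUtility_neg_iff (ha : 0 < a) {c : ℝ} (hc : 0 < 1 + a * (c + b)) :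
    deriv (sellerUtility a b) c < 0 ↔ 0 < sellerFoc a b c := by
  rw [(hasDerivAt_sellerUtility a b c).deriv, one_sub_mul_exp_neg_neg_iff hc,
    sellerFoc, one_div_mul_eq_div, ← lt_div_iff₀' ha]
  constructor <;> intro h <;> linarith

theorem sellerFoc_lt_sellerFoc (ha : 0 < a) {x y : ℝ} (hx : 0 < 1 + a * (x + b)) (hxy : x < y) :
    sellerFoc a b x < sellerFoc a b y := by
  have hlog : log (1 + a * (x + b)) < log (1 + a * (y + b)) :=
    log_lt_log hx (by nlinarith)
  unfold sellerFoc
  have := mul_lt_mul_of_pos_left hlog (one_div_pos.2 ha)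
  linarith

variable {ĉ : ℝ} (ha : 0 < a) (hroot : sellerFoc a b ĉ = 0)
include ha hroot

theorem deriv_sellerUtility_pos (hb : 0 ≤ b) {c : ℝ} (hc : 0 ≤ c) (hcĉ : c < ĉ) :
    0 < deriv (sellerUtility a b) c := by
  have hdom : 0 < 1 + a * (c + b) := by positivity
  exact (deriv_sellerUtility_pos_iff ha hdom).2 (hroot ▸ sellerFoc_lt_sellerFoc ha hdom hcĉ)

theorem deriv_sellerUtility_neg (hdom : 0 < 1 + a * (ĉ + b)) {c : ℝ} (hĉc : ĉ < c) :
    deriv (sellerUtility a b) c < 0 :=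
  (deriv_sellerUtility_neg_iff ha (by nlinarith)).2 (hroot ▸ sellerFoc_lt_sellerFoc ha hdom hĉc)

theorem strictMonoOn_sellerUtility (hb : 0 ≤ b) : StrictMonoOn (sellerUtility a b) (Icc 0 ĉ) :=
  strictMonoOn_of_deriv_pos (convex_Icc 0 ĉ) (continuous_sellerUtility a b).continuousOn
    fun c hc => by
      rw [interior_Icc] at hc
      exact deriv_sellerUtility_pos ha hroot hb hc.1.le hc.2

theorem strictAntiOn_sellerUtility (hdom : 0 < 1 + a * (ĉ + b)) :
    StrictAntiOn (sellerUtility a b) (Ici ĉ) :=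
  strictAntiOn_of_deriv_neg (convex_Ici ĉ) (continuous_sellerUtility a b).continuousOn
    fun c hc => by
      rw [interior_Ici] at hc
      exact deriv_sellerUtility_neg ha hroot hdom hc

end

/-- with U the seller's utility under a constant price and ĉ the unique
root of F(c) = c - 1 + (1/(λT))ln(1 + λT(c + βT/2)), U' > 0 below ĉ and U' < 0 above ĉ
on [0,1]; hence the maximizer of U over [0,1] is ĉ if ĉ ∈ [0,1], 0 if ĉ < 0, and 1 if
ĉ > 1. -/
theorem stmt_10 (lam β T chat : ℝ) (hlam : 0 < lam) (hβ : 0 ≤ β) (hT : 0 < T)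
    (hdom : 0 < 1 + lam * T * (chat + β * T / 2))
    (hroot : chat - 1 + (1 / (lam * T)) * Real.log (1 + lam * T * (chat + β * T / 2)) = 0)
    (U : ℝ → ℝ)
    (hU : ∀ c, U c = c * (1 - Real.exp (-(lam * T * (1 - c)))) -
      β * ((T / 2) * (1 - Real.exp (-(lam * T * (1 - c)))) +
        T * Real.exp (-(lam * T * (1 - c))))) :
    (∀ c ∈ Set.Icc (0:ℝ) 1, c < chat → 0 < deriv U c) ∧
    (∀ c ∈ Set.Icc (0:ℝ) 1, chat < c → deriv U c < 0) ∧
    (chat ∈ Set.Icc (0:ℝ) 1 → IsMaxOn U (Set.Icc (0:ℝ) 1) chat) ∧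
    (chat < 0 → IsMaxOn U (Set.Icc (0:ℝ) 1) 0) ∧
    (1 < chat → IsMaxOn U (Set.Icc (0:ℝ) 1) 1) := by
  have hUeq : U = sellerUtility (lam * T) (β * T / 2) := by
    funext c
    rw [hU, sellerUtility]
    ring
  subst hUeq
  have ha : 0 < lam * T := mul_pos hlam hT
  have hb : 0 ≤ β * T / 2 := by positivity
  have hmono := (strictMonoOn_sellerUtility ha hroot hb).monotoneOn
  have hanti := (strictAntiOn_sellerUtility ha hroot hdom).antitoneOn
  refine ⟨fun c hc => deriv_sellerUtility_pos ha hroot hb hc.1,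
    fun c _ => deriv_sellerUtility_neg ha hroot hdom, fun hchat => ?_, fun hchat => ?_,
    fun hchat => ?_⟩
  · exact .of_monotoneOn_antitoneOn hmono (hanti.mono Icc_subset_Ici_self) hchat
  · refine .of_monotoneOn_antitoneOn (by simp) (hanti.mono ?_) (by simp)
    exact Icc_subset_Ici_self.trans (Ici_subset_Ici.2 hchat.le)
  · exact .of_monotoneOn_antitoneOn (hmono.mono (Icc_subset_Icc_right hchat.le)) (by simp)
      (by simp)
end

section
/- Let λ > 0, let p be differentiable, let w be right-differentiable at v with w'(v) ≠ 0 and 0 < v < 1, and suppose that the function τ ↦ (v - p(τ)) e^{-λτ(1 - w⁻¹(τ))}, where w⁻¹ is the (differentiable) inverse of w near w(v), has a stationary point at τ = w(v). Then λ(-1 + v + w(v)/w'(v))(v - p(w(v))) = p'(w(v)), equivalently w'(v) = λ w(v)(v - p(w(v))) / (λ(1-v)(v - p(w(v))) + p'(w(v))) when the denominator is nonzero. -/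
/-!
Differentiate the buyer's objective by the product and chain rules. Its derivative is a positive
exponential factor times `-(p' + λ (v - p τ) (1 - w⁻¹ τ - τ (w⁻¹)' τ))`, so stationarity at
`τ = w v`, where `w⁻¹ τ = v` and `(w⁻¹)' τ = 1 / w'`, is exactly the first identity. The second
is this identity solved for `w'`: it rewrites the denominator as `λ (w v / w') (v - p (w v))`.
-/

open Real

theorem hasDerivAt_sub_mul_exp_neg_mul_one_sub {lam v x p' q' : ℝ} {p q : ℝ → ℝ}
    (hp : HasDerivAt p p' x) (hq : HasDerivAt q q' x) :
    HasDerivAt (fun τ => (v - p τ) * exp (-(lam * τ * (1 - q τ))))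
      (-exp (-(lam * x * (1 - q x))) * (p' + lam * (v - p x) * (1 - q x - x * q'))) x := by
  have hexponent : HasDerivAt (fun τ => lam * τ * (1 - q τ))
      (lam * (1 - q x) + lam * x * -q') x :=
    ((hasDerivAt_id x).const_mul lam |>.congr_deriv (mul_one lam)).mul (hq.const_sub 1)
  refine ((hp.const_sub v).mul hexponent.fun_neg.exp).congr_deriv ?_
  ring

theorem add_mul_one_sub_eq_zero_of_stationary {lam v x p' q' : ℝ} {p q : ℝ → ℝ}
    (hp : HasDerivAt p p' x) (hq : HasDerivAt q q' x)
    (hstat : HasDerivAt (fun τ => (v - p τ) * exp (-(lam * τ * (1 - q τ)))) 0 x) :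
    p' + lam * (v - p x) * (1 - q x - x * q') = 0 := by
  have h := hstat.unique (hasDerivAt_sub_mul_exp_neg_mul_one_sub hp hq)
  simpa [exp_ne_zero] using h.symm

theorem eq_div_of_mul_add_div_mul_eq {lam v a b c d : ℝ}
    (h : lam * (-1 + v + a / b) * c = d) (hden : lam * (1 - v) * c + d ≠ 0) :
    b = lam * a * c / (lam * (1 - v) * c + d) := by
  have hden_eq : lam * (1 - v) * c + d = lam * a * c / b := by
    rw [← h]; ring
  rw [hden_eq] at hden ⊢
  have hnum : lam * a * c ≠ 0 := fun h0 => hden (by rw [h0, zero_div])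
  exact (div_div_cancel₀ hnum).symm

theorem stmt_16_general (lam v w' p'w : ℝ) (p w winv : ℝ → ℝ)
    (hwinv : winv (w v) = v)
    (hwinvd : HasDerivAt winv (1 / w') (w v))
    (hp : HasDerivAt p p'w (w v))
    (hstat : HasDerivAt
      (fun τ => (v - p τ) * Real.exp (-(lam * τ * (1 - winv τ)))) 0 (w v)) :
    lam * (-1 + v + w v / w') * (v - p (w v)) = p'w ∧
    (lam * (1 - v) * (v - p (w v)) + p'w ≠ 0 →
      w' = lam * w v * (v - p (w v)) /
        (lam * (1 - v) * (v - p (w v)) + p'w)) := by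
  have hfoc := add_mul_one_sub_eq_zero_of_stationary hp hwinvd hstat
  rw [hwinv] at hfoc
  have key : lam * (-1 + v + w v / w') * (v - p (w v)) = p'w := by
    linear_combination -hfoc
  exact ⟨key, eq_div_of_mul_add_div_mul_eq key⟩

/-- first-order condition of the buyer's interim utility maximization.
If τ ↦ (v - p(τ))e^{-λτ(1 - w⁻¹(τ))} is stationary at τ = w(v), with w⁻¹ the
differentiable inverse of w near w(v), then
λ(-1 + v + w(v)/w'(v))(v - p(w(v))) = p'(w(v)), equivalently
w'(v) = λw(v)(v - p(w(v))) / (λ(1-v)(v - p(w(v))) + p'(w(v))) when the denominator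
is nonzero. -/
theorem stmt_16 (lam v w' p'w : ℝ) (p w winv : ℝ → ℝ)
    (hlam : 0 < lam) (hv0 : 0 < v) (hv1 : v < 1) (hw' : w' ≠ 0)
    (hwd : HasDerivWithinAt w w' (Set.Ici v) v)
    (hwinv : winv (w v) = v)
    (hwinvd : HasDerivAt winv (1 / w') (w v))
    (hp : HasDerivAt p p'w (w v))
    (hstat : HasDerivAt
      (fun τ => (v - p τ) * Real.exp (-(lam * τ * (1 - winv τ)))) 0 (w v)) :
    lam * (-1 + v + w v / w') * (v - p (w v)) = p'w ∧
    (lam * (1 - v) * (v - p (w v)) + p'w ≠ 0 →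
      w' = lam * w v * (v - p (w v)) /
        (lam * (1 - v) * (v - p (w v)) + p'w)) :=
  stmt_16_general lam v w' p'w p w winv hwinv hwinvd hp hstat
end
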